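/- arXiv:2405.15136 — 3 statements merged into one kernel-verified Lean document; each statement's English description precedes it below -/
import Mathlib

section
/- Let 0 < ε ≤ N^{-1}, β > 0, σ ≥ 1, and let x_{i-1} < x_i be Bakhvalov mesh points x_j = -(σε/β) ln(1 - 2(1-ε)j/N) with 1 ≤ i ≤ N/2 - 1. Then for any 0 ≤ ρ ≤ σ and all x ∈ [x_{i-1}, x_i], the bound h_i^ρ e^{-βx/ε} ≤ C ε^ρ N^{-ρ} holds with a constant C independent of ε and N, where h_i = x_i - x_{i-1}. In particular h_i^ρ e^{-β x_{i-1}/ε} ≤ C ε^ρ N^{-ρ}. -/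
set_option maxHeartbeats 1000000


/-- Interaction of the fine Bakhvalov mesh width with the boundary-layer exponential:
for `1 ≤ i ≤ N/2 - 1`, `0 ≤ ρ ≤ σ` and `x ∈ [x_{i-1}, x_i]`,
`h_i^ρ e^{-βx/ε} ≤ C ε^ρ N^{-ρ}` with `C` independent of `ε` and `N`;
in particular this holds at `x = x_{i-1}`. -/
theorem stmt4 (σ β : ℝ) (hσ : 1 ≤ σ) (hβ : 0 < β) :
    ∃ C > (0:ℝ), ∀ (N : ℕ) (ε : ℝ) (x : ℕ → ℝ) (i : ℕ) (ρ : ℝ),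
      4 ≤ N → Even N → 0 < ε → ε ≤ 1 / N →
      (∀ j ≤ N / 2, x j = -(σ * ε / β) * Real.log (1 - 2 * (1 - ε) * j / N)) →
      1 ≤ i → i ≤ N / 2 - 1 → 0 ≤ ρ → ρ ≤ σ →
      (∀ t ∈ Set.Icc (x (i-1)) (x i),
        (x i - x (i-1)) ^ ρ * Real.exp (-β * t / ε) ≤ C * ε ^ ρ * (N:ℝ) ^ (-ρ)) ∧
      (x i - x (i-1)) ^ ρ * Real.exp (-β * x (i-1) / ε) ≤ C * ε ^ ρ * (N:ℝ) ^ (-ρ) := by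
  have hσ0 : (0:ℝ) < σ := by linarith
  set b : ℝ := max 1 (4 * σ / β) with hbdef
  have hb1 : (1:ℝ) ≤ b := le_max_left _ _
  have hb0 : (0:ℝ) < b := by linarith
  refine ⟨b ^ σ, Real.rpow_pos_of_pos hb0 σ, ?_⟩
  intro N ε x i ρ hN4 hNe hε hεN hx hi1 hiN hρ0 hρσ
  clear_value b
  -- basic numeric facts
  have hN2 : N / 2 * 2 = N := Nat.div_mul_cancel hNe.two_dvd
  have h2i : 2 * i + 2 ≤ N := by omega
  have him : i - 1 ≤ N / 2 := by omega
  have hile : i ≤ N / 2 := by omega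
  have hn0 : (0:ℝ) < (N:ℝ) := by positivity
  have hn4 : (4:ℝ) ≤ (N:ℝ) := by exact_mod_cast hN4
  have h2iR : 2 * (i:ℝ) + 2 ≤ (N:ℝ) := by exact_mod_cast h2i
  have hiR1 : (1:ℝ) ≤ (i:ℝ) := by exact_mod_cast hi1
  have hε1 : ε < 1 := by
    have : (1:ℝ)/N ≤ 1/4 := by
      apply one_div_le_one_div_of_le <;> linarith
    linarith
  set n : ℝ := (N:ℝ) with hndef
  set Ti : ℝ := 1 - 2 * (1 - ε) * (i:ℝ) / n with hTidef
  set Tm : ℝ := 1 - 2 * (1 - ε) * ((i:ℝ) - 1) / n with hTmdef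
  clear_value n Ti Tm
  have hxi : x i = -(σ * ε / β) * Real.log Ti := by
    rw [hTidef]; exact hx i hile
  have hxm : x (i-1) = -(σ * ε / β) * Real.log Tm := by
    have := hx (i-1) him
    rw [hTmdef]
    rwa [Nat.cast_sub hi1, Nat.cast_one] at this
  have hTm_eq : Tm = Ti + 2 * (1 - ε) / n := by
    rw [hTmdef, hTidef]; field_simp; ring
  have hu0 : 0 < 2 * (1 - ε) / n := by
    apply div_pos (by linarith) hn0
  have hTi_lb : 2 * (1 - ε) / n ≤ Ti := by
    rw [div_le_iff₀ hn0]
    have h1 : Ti * n = n - 2 * (1 - ε) * (i:ℝ) := by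
      rw [hTidef]; field_simp
    rw [h1]
    nlinarith [hε.le, hiR1]
  have hTi_pos : 0 < Ti := lt_of_lt_of_le hu0 hTi_lb
  have hTm_pos : 0 < Tm := by rw [hTm_eq]; linarith
  have hTm_le1 : Tm ≤ 1 := by
    have h0 : 0 ≤ 2 * (1 - ε) * ((i:ℝ) - 1) / n := by
      apply div_nonneg _ hn0.le
      have : 0 ≤ (1 - ε) := by linarith
      nlinarith
    rw [hTmdef]; linarith
  have hTm_le2 : Tm ≤ 2 * Ti := by rw [hTm_eq]; linarith
  have hc : 0 < σ * ε / β := by positivity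
  have hh_eq : x i - x (i-1) = (σ * ε / β) * Real.log (Tm / Ti) := by
    rw [hxi, hxm, Real.log_div hTm_pos.ne' hTi_pos.ne']; ring
  have hh_nonneg : 0 ≤ x i - x (i-1) := by
    rw [hh_eq]
    apply mul_nonneg hc.le
    apply Real.log_nonneg
    rw [le_div_iff₀ hTi_pos]
    rw [hTm_eq]; linarith
  have hh_le : x i - x (i-1) ≤ (σ * ε / β) * (2 * (1 - ε) / n / Ti) := by
    rw [hh_eq]
    apply mul_le_mul_of_nonneg_left _ hc.le
    have hlog := Real.log_le_sub_one_of_pos (div_pos hTm_pos hTi_pos)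
    have : Tm / Ti - 1 = 2 * (1 - ε) / n / Ti := by
      rw [hTm_eq]; field_simp; ring
    rw [this] at hlog
    linarith
  have hrhs_nonneg : 0 ≤ (σ * ε / β) * (2 * (1 - ε) / n / Ti) :=
    mul_nonneg hc.le (div_nonneg hu0.le hTi_pos.le)
  have hprod : (x i - x (i-1)) * Tm ≤ 4 * σ / β * ε / n := by
    have hstep : (x i - x (i-1)) * Tm ≤
        ((σ * ε / β) * (2 * (1 - ε) / n / Ti)) * (2 * Ti) :=
      mul_le_mul hh_le hTm_le2 hTm_pos.le (by positivity)
    have heq2 : ((σ * ε / β) * (2 * (1 - ε) / n / Ti)) * (2 * Ti)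
        = 4 * σ / β * ε * (1 - ε) / n := by
      field_simp
      ring
    have hfin : 4 * σ / β * ε * (1 - ε) / n ≤ 4 * σ / β * ε / n := by
      rw [div_le_div_iff₀ hn0 hn0]
      have h1 : 0 ≤ 4 * σ / β * ε := by positivity
      nlinarith [mul_nonneg (mul_nonneg h1 hε.le) hn0.le]
    rw [heq2] at hstep
    linarith
  have hexp : Real.exp (-β * x (i-1) / ε) = Tm ^ σ := by
    have harg : -β * x (i-1) / ε = Real.log Tm * σ := by
      rw [hxm]; field_simp
    rw [harg, ← Real.rpow_def_of_pos hTm_pos]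
  -- the key estimate at x_{i-1}
  have key : (x i - x (i-1)) ^ ρ * Real.exp (-β * x (i-1) / ε)
      ≤ b ^ σ * ε ^ ρ * n ^ (-ρ) := by
    rw [hexp]
    have h4σβ : (0:ℝ) ≤ 4 * σ / β := by positivity
    calc (x i - x (i-1)) ^ ρ * Tm ^ σ
        ≤ (x i - x (i-1)) ^ ρ * Tm ^ ρ := by
          apply mul_le_mul_of_nonneg_left
            (Real.rpow_le_rpow_of_exponent_ge hTm_pos hTm_le1 hρσ)
            (Real.rpow_nonneg hh_nonneg ρ)
      _ = ((x i - x (i-1)) * Tm) ^ ρ := (Real.mul_rpow hh_nonneg hTm_pos.le).symm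
      _ ≤ (4 * σ / β * ε / n) ^ ρ :=
          Real.rpow_le_rpow (mul_nonneg hh_nonneg hTm_pos.le) hprod hρ0
      _ = (4 * σ / β) ^ ρ * ε ^ ρ * n ^ (-ρ) := by
          rw [Real.div_rpow (by positivity) hn0.le,
            Real.mul_rpow h4σβ hε.le, Real.rpow_neg hn0.le, div_eq_mul_inv]
      _ ≤ b ^ σ * ε ^ ρ * n ^ (-ρ) := by
          apply mul_le_mul_of_nonneg_right _ (by positivity)
          apply mul_le_mul_of_nonneg_right _ (by positivity)
          calc (4 * σ / β) ^ ρ ≤ b ^ ρ :=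
                Real.rpow_le_rpow h4σβ (by rw [hbdef]; exact le_max_right _ _) hρ0
            _ ≤ b ^ σ := Real.rpow_le_rpow_of_exponent_le hb1 hρσ
  refine ⟨fun t ht => ?_, key⟩
  refine le_trans ?_ key
  apply mul_le_mul_of_nonneg_left _ (Real.rpow_nonneg hh_nonneg ρ)
  apply Real.exp_le_exp.mpr
  rw [div_le_div_iff₀ hε hε]
  nlinarith [mul_nonneg (mul_nonneg hβ.le hε.le) (sub_nonneg.mpr ht.1)]
end

section
/- Let T be a rectangle with edge lengths h_x and h_y, and let v be a polynomial on T of degree ≤ k in each variable. Then there is a constant C depending only on k such that the trace inequality ‖v‖_{L²(e)} ≤ C h_y^{-1/2} ‖v‖_{L²(T)} holds for each edge e of T parallel to the x-axis (and symmetrically with h_x^{-1/2} for edges parallel to the y-axis). -/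
open MeasureTheory intervalIntegral Polynomial Finset

noncomputable def fquad (k : ℕ) (c : Fin (k+1) → ℝ) : ℝ :=
  ∑ i : Fin (k+1), ∑ j : Fin (k+1), c i * c j * (1 / ((i:ℕ) + (j:ℕ) + 1 : ℝ))

lemma integral_eq_fquad (k : ℕ) (c : Fin (k+1) → ℝ) :
    ∫ t in (0:ℝ)..1, (∑ i : Fin (k+1), c i * t ^ (i:ℕ))^2 = fquad k c := by
  have h1 : ∀ t : ℝ, (∑ i : Fin (k+1), c i * t ^ (i:ℕ))^2
      = ∑ i : Fin (k+1), ∑ j : Fin (k+1), (c i * c j) * t ^ ((i:ℕ)+(j:ℕ)) := by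
    intro t
    rw [sq, Finset.sum_mul_sum]
    exact Finset.sum_congr rfl fun i _ => Finset.sum_congr rfl fun j _ => by
      rw [pow_add]; ring
  simp only [h1]
  rw [intervalIntegral.integral_finset_sum]
  · refine Finset.sum_congr rfl fun i _ => ?_
    rw [intervalIntegral.integral_finset_sum]
    · refine Finset.sum_congr rfl fun j _ => ?_
      rw [intervalIntegral.integral_const_mul, integral_pow]
      push_cast
      norm_num
    · intro j _
      exact (Continuous.intervalIntegrable (by fun_prop) _ _)
  · intro i _
    exact (Continuous.intervalIntegrable (by fun_prop) _ _)

lemma fquad_smul (k : ℕ) (t : ℝ) (c : Fin (k+1) → ℝ) :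
    fquad k (t • c) = t^2 * fquad k c := by
  unfold fquad
  rw [Finset.mul_sum]
  refine Finset.sum_congr rfl fun i _ => ?_
  rw [Finset.mul_sum]
  refine Finset.sum_congr rfl fun j _ => ?_
  simp only [Pi.smul_apply, smul_eq_mul]
  ring

lemma fquad_pos (k : ℕ) (c : Fin (k+1) → ℝ) (hc : c ≠ 0) : 0 < fquad k c := by
  rw [← integral_eq_fquad]
  have hfi : IntervalIntegrable (fun t => (∑ i : Fin (k+1), c i * t ^ (i:ℕ))^2)
      volume 0 1 := (Continuous.intervalIntegrable (by fun_prop) _ _)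
  refine (intervalIntegral.integral_pos_iff_support_of_nonneg_ae'
    (ae_of_all _ fun t => sq_nonneg _) hfi).mpr ⟨zero_lt_one, ?_⟩
  set P : ℝ[X] := ∑ i : Fin (k+1), Polynomial.C (c i) * Polynomial.X ^ (i:ℕ) with hP
  have hPeval : ∀ t, P.eval t = ∑ i : Fin (k+1), c i * t ^ (i:ℕ) := by
    intro t; simp [hP, Polynomial.eval_finset_sum]
  have hPne : P ≠ 0 := by
    obtain ⟨i, hi⟩ : ∃ i, c i ≠ 0 := by
      by_contra hall
      push_neg at hall
      exact hc (funext hall)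
    intro h
    have hco : P.coeff (i:ℕ) = c i := by
      simp only [hP, Polynomial.finset_sum_coeff, Polynomial.coeff_C_mul,
        Polynomial.coeff_X_pow]
      rw [Finset.sum_eq_single i]
      · simp
      · intro j _ hji
        simp [Fin.val_eq_val]
        exact fun h => absurd h.symm hji
      · simp
    rw [h] at hco
    simp at hco
    exact hi hco.symm
  have hsub : Set.Ioc (0:ℝ) 1 \ {x | P.IsRoot x} ⊆
      (Function.support fun t => (∑ i : Fin (k+1), c i * t ^ (i:ℕ))^2) ∩ Set.Ioc 0 1 := by
    rintro t ⟨ht1, ht2⟩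
    refine ⟨?_, ht1⟩
    have : P.eval t ≠ 0 := ht2
    rw [hPeval] at this
    simp [Function.mem_support]
    exact this
  have hroots : volume {x : ℝ | P.IsRoot x} = 0 :=
    (Polynomial.finite_setOf_isRoot hPne).measure_zero volume
  have : volume (Set.Ioc (0:ℝ) 1 \ {x | P.IsRoot x}) = volume (Set.Ioc (0:ℝ) 1) :=
    measure_diff_null hroots
  calc (0:ENNReal) < volume (Set.Ioc (0:ℝ) 1) := by simp [Real.volume_Ioc]
  _ = volume (Set.Ioc (0:ℝ) 1 \ {x | P.IsRoot x}) := this.symm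
  _ ≤ _ := measure_mono hsub

lemma fquad_zero (k : ℕ) : fquad k 0 = 0 := by simp [fquad]

lemma fquad_min (k : ℕ) : ∃ m > (0:ℝ), ∀ c : Fin (k+1) → ℝ, m * ‖c‖^2 ≤ fquad k c := by
  have hcont : Continuous (fquad k) := by
    apply continuous_finset_sum; intro i _
    apply continuous_finset_sum; intro j _
    exact ((continuous_apply i).mul (continuous_apply j)).mul continuous_const
  have hne : (Metric.sphere (0 : Fin (k+1) → ℝ) 1).Nonempty :=
    NormedSpace.sphere_nonempty.mpr zero_le_one
  obtain ⟨u, huS, hminOn⟩ := (isCompact_sphere (0 : Fin (k+1) → ℝ) 1).exists_isMinOn hne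
    hcont.continuousOn
  have hu1 : ‖u‖ = 1 := mem_sphere_zero_iff_norm.mp huS
  have hune : u ≠ 0 := by intro h; rw [h] at hu1; simp at hu1
  refine ⟨fquad k u, fquad_pos k u hune, fun c => ?_⟩
  rcases eq_or_ne c 0 with rfl | hc
  · simp [fquad_zero]
  · have hr : (0:ℝ) < ‖c‖ := norm_pos_iff.mpr hc
    have hu' : (‖c‖⁻¹ • c) ∈ Metric.sphere (0 : Fin (k+1) → ℝ) 1 := by
      rw [mem_sphere_zero_iff_norm, norm_smul, norm_inv, norm_norm,
        inv_mul_cancel₀ (ne_of_gt hr)]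
    have h2 : fquad k u ≤ fquad k (‖c‖⁻¹ • c) := hminOn hu'
    rw [fquad_smul] at h2
    have h3 := mul_le_mul_of_nonneg_right h2 (sq_nonneg ‖c‖)
    calc fquad k u * ‖c‖^2 ≤ (‖c‖⁻¹)^2 * fquad k c * ‖c‖^2 := h3
    _ = fquad k c := by field_simp

lemma unit_trace (k : ℕ) : ∃ C > (0:ℝ), ∀ p : ℝ[X], p.natDegree ≤ k →
    (p.eval 0)^2 ≤ C * ∫ t in (0:ℝ)..1, (p.eval t)^2 ∧
    (p.eval 1)^2 ≤ C * ∫ t in (0:ℝ)..1, (p.eval t)^2 := by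
  obtain ⟨m, hm, hmin⟩ := fquad_min k
  refine ⟨((k:ℝ)+1)^2 / m, by positivity, fun p hp => ?_⟩
  set c : Fin (k+1) → ℝ := fun i => p.coeff i with hcdef
  have hev : ∀ t, p.eval t = ∑ i : Fin (k+1), c i * t^(i:ℕ) := by
    intro t
    rw [Polynomial.eval_eq_sum_range' (Nat.lt_succ_of_le hp),
      ← Fin.sum_univ_eq_sum_range (fun i => p.coeff i * t ^ i) (k+1)]
  have hint : ∫ t in (0:ℝ)..1, (p.eval t)^2 = fquad k c := by
    simp only [hev]; exact integral_eq_fquad k c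
  have hfc : m * ‖c‖^2 ≤ fquad k c := hmin c
  have hnorm : ∀ i, |c i| ≤ ‖c‖ := fun i => by
    simpa [Real.norm_eq_abs] using norm_le_pi_norm c i
  have hcn : (0:ℝ) ≤ ‖c‖ := norm_nonneg c
  have hk1 : (1:ℝ) ≤ ((k:ℝ)+1)^2 := by nlinarith [Nat.cast_nonneg (α := ℝ) k]
  have key : ∀ r : ℝ, r^2 ≤ ((k:ℝ)+1)^2 * ‖c‖^2 →
      r^2 ≤ ((k:ℝ)+1)^2 / m * ∫ t in (0:ℝ)..1, (p.eval t)^2 := by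
    intro r hr
    rw [hint]
    calc r^2 ≤ ((k:ℝ)+1)^2 * ‖c‖^2 := hr
    _ = ((k:ℝ)+1)^2 / m * (m * ‖c‖^2) := by field_simp
    _ ≤ ((k:ℝ)+1)^2 / m * fquad k c := by
        apply mul_le_mul_of_nonneg_left hfc (by positivity)
  constructor
  · apply key
    have h0 : p.eval 0 = c 0 := by
      rw [hev]; simp [Fin.sum_univ_succ]
    rw [h0]
    have := hnorm 0
    nlinarith [abs_nonneg (c 0), sq_abs (c 0)]
  · apply key
    have h1 : p.eval 1 = ∑ i : Fin (k+1), c i := by rw [hev]; simp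
    rw [h1]
    have habs : |∑ i : Fin (k+1), c i| ≤ ((k:ℝ)+1) * ‖c‖ := by
      calc |∑ i : Fin (k+1), c i| ≤ ∑ i : Fin (k+1), |c i| :=
        Finset.abs_sum_le_sum_abs _ _
      _ ≤ ∑ _i : Fin (k+1), ‖c‖ := Finset.sum_le_sum fun i _ => hnorm i
      _ = ((k:ℝ)+1) * ‖c‖ := by
          rw [Finset.sum_const, Finset.card_univ, Fintype.card_fin, nsmul_eq_mul]
          push_cast; ring
    nlinarith [abs_nonneg (∑ i : Fin (k+1), c i), sq_abs (∑ i : Fin (k+1), c i),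
      Nat.cast_nonneg (α := ℝ) k]

lemma scaled_trace (k : ℕ) : ∃ C > (0:ℝ), ∀ p : ℝ[X], p.natDegree ≤ k →
    ∀ b h : ℝ, 0 < h →
    (p.eval b)^2 ≤ C / h * ∫ y in b..(b+h), (p.eval y)^2 ∧
    (p.eval (b+h))^2 ≤ C / h * ∫ y in b..(b+h), (p.eval y)^2 := by
  obtain ⟨C, hC, H⟩ := unit_trace k
  refine ⟨C, hC, fun p hp b h hh => ?_⟩
  set q := p.comp (Polynomial.C h * Polynomial.X + Polynomial.C b) with hq
  have hqdeg : q.natDegree ≤ k := by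
    rw [hq, Polynomial.natDegree_comp, Polynomial.natDegree_linear (ne_of_gt hh), mul_one]
    exact hp
  have hqe : ∀ t, q.eval t = p.eval (h * t + b) := by intro t; simp [hq]
  have hsub : ∫ t in (0:ℝ)..1, (q.eval t)^2 = h⁻¹ * ∫ y in b..(b+h), (p.eval y)^2 := by
    have hs := intervalIntegral.smul_integral_comp_mul_add
      (f := fun y => (p.eval y)^2) (a := (0:ℝ)) (b := (1:ℝ)) h b
    simp only [smul_eq_mul, mul_zero, zero_add, mul_one] at hs
    have : ∫ t in (0:ℝ)..1, (q.eval t)^2 = ∫ t in (0:ℝ)..1, (p.eval (h*t+b))^2 := by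
      simp only [hqe]
    rw [this, eq_inv_mul_iff_mul_eq₀ (ne_of_gt hh), hs, add_comm h b]
  obtain ⟨h0, h1⟩ := H q hqdeg
  rw [hsub] at h0 h1
  constructor
  · have he : p.eval b = q.eval 0 := by rw [hqe]; norm_num
    rw [he]
    calc (q.eval 0)^2 ≤ C * (h⁻¹ * ∫ y in b..(b+h), (p.eval y)^2) := h0
    _ = C / h * ∫ y in b..(b+h), (p.eval y)^2 := by ring
  · have he : p.eval (b+h) = q.eval 1 := by rw [hqe]; ring_nf
    rw [he]
    calc (q.eval 1)^2 ≤ C * (h⁻¹ * ∫ y in b..(b+h), (p.eval y)^2) := h1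
    _ = C / h * ∫ y in b..(b+h), (p.eval y)^2 := by ring

lemma swap_int (f : ℝ × ℝ → ℝ) (hf : Continuous f) {a a' b b' : ℝ}
    (ha : a ≤ a') (hb : b ≤ b') :
    ∫ x in a..a', ∫ y in b..b', f (x, y) = ∫ y in b..b', ∫ x in a..a', f (x, y) := by
  simp only [intervalIntegral.integral_of_le ha, intervalIntegral.integral_of_le hb]
  apply MeasureTheory.integral_integral_swap
  show Integrable f _
  rw [Measure.prod_restrict, ← Measure.volume_eq_prod]
  exact ((hf.continuousOn.integrableOn_compact (isCompact_Icc.prod isCompact_Icc)).mono_set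
    (Set.prod_mono Set.Ioc_subset_Icc_self Set.Ioc_subset_Icc_self))

lemma sqrt_step {C₀ h I D : ℝ} (hC₀ : 0 < C₀) (hh : 0 < h)
    (hI : I ≤ C₀ / h * D) :
    Real.sqrt I ≤ Real.sqrt C₀ * h ^ (-(1/2:ℝ)) * Real.sqrt D := by
  have h1 : Real.sqrt I ≤ Real.sqrt (C₀ / h * D) := Real.sqrt_le_sqrt hI
  have h2 : Real.sqrt (C₀/h*D) = Real.sqrt C₀ * h ^ (-(1/2:ℝ)) * Real.sqrt D := by
    rw [Real.sqrt_mul (by positivity : (0:ℝ) ≤ C₀/h) D, Real.sqrt_div hC₀.le,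
      Real.rpow_neg hh.le, ← Real.sqrt_eq_rpow, div_eq_mul_inv]
  rw [← h2]; exact h1


/-- Tensor-product polynomials of degree `≤ k` in each variable. -/
def QkSet (k : ℕ) : Set (ℝ × ℝ → ℝ) :=
  {f | ∃ c : Fin (k+1) → Fin (k+1) → ℝ,
    ∀ z : ℝ × ℝ, f z = ∑ i : Fin (k+1), ∑ j : Fin (k+1), c i j * z.1 ^ (i:ℕ) * z.2 ^ (j:ℕ)}


/-- Anisotropic discrete trace inequality on a rectangle `T = [a,a+hₓ] × [b,b+h_y]`:
for `v ∈ Q_k(T)`, `‖v‖_{L²(e)} ≤ C h_y^{-1/2} ‖v‖_{L²(T)}` on the edges parallel to the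
`x`-axis, and symmetrically `‖v‖_{L²(e)} ≤ C hₓ^{-1/2} ‖v‖_{L²(T)}` on the edges parallel
to the `y`-axis, with `C` depending only on `k`. -/
theorem stmt8 (k : ℕ) :
    ∃ C > (0:ℝ), ∀ (a b hx hy : ℝ) (v : ℝ × ℝ → ℝ), 0 < hx → 0 < hy → v ∈ QkSet k →
      (Real.sqrt (∫ x in a..(a+hx), (v (x, b))^2) ≤
        C * hy ^ (-(1/2 : ℝ)) *
          Real.sqrt (∫ x in a..(a+hx), ∫ y in b..(b+hy), (v (x, y))^2)) ∧
      (Real.sqrt (∫ x in a..(a+hx), (v (x, b+hy))^2) ≤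
        C * hy ^ (-(1/2 : ℝ)) *
          Real.sqrt (∫ x in a..(a+hx), ∫ y in b..(b+hy), (v (x, y))^2)) ∧
      (Real.sqrt (∫ y in b..(b+hy), (v (a, y))^2) ≤
        C * hx ^ (-(1/2 : ℝ)) *
          Real.sqrt (∫ x in a..(a+hx), ∫ y in b..(b+hy), (v (x, y))^2)) ∧
      (Real.sqrt (∫ y in b..(b+hy), (v (a+hx, y))^2) ≤
        C * hx ^ (-(1/2 : ℝ)) *
          Real.sqrt (∫ x in a..(a+hx), ∫ y in b..(b+hy), (v (x, y))^2)) := by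
  obtain ⟨C₀, hC₀, H⟩ := scaled_trace k
  refine ⟨Real.sqrt C₀, Real.sqrt_pos.mpr hC₀, ?_⟩
  intro a b hx hy v hhx hhy hv
  obtain ⟨c, hc⟩ := hv
  have hvfun : v = fun z : ℝ × ℝ =>
      ∑ i : Fin (k+1), ∑ j : Fin (k+1), c i j * z.1 ^ (i:ℕ) * z.2 ^ (j:ℕ) := funext hc
  have hvc : Continuous v := by rw [hvfun]; fun_prop
  have hax : a ≤ a + hx := by linarith
  have hby : b ≤ b + hy := by linarith
  -- For each x, y ↦ v (x,y) is a polynomial of degree ≤ k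
  have hPy : ∀ x : ℝ, ∃ P : ℝ[X], P.natDegree ≤ k ∧ ∀ y, P.eval y = v (x, y) := by
    intro x
    refine ⟨∑ j : Fin (k+1), Polynomial.C (∑ i : Fin (k+1), c i j * x ^ (i:ℕ)) *
      Polynomial.X ^ (j:ℕ), ?_, ?_⟩
    · apply Polynomial.natDegree_sum_le_of_forall_le
      intro j _
      exact (Polynomial.natDegree_C_mul_X_pow_le _ _).trans j.is_le
    · intro y
      rw [hc (x, y)]
      simp only [Polynomial.eval_finset_sum, Polynomial.eval_mul, Polynomial.eval_C,
        Polynomial.eval_pow, Polynomial.eval_X]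
      rw [Finset.sum_comm]
      exact Finset.sum_congr rfl fun j _ => by rw [Finset.sum_mul]
  -- For each y, x ↦ v (x,y) is a polynomial of degree ≤ k
  have hQx : ∀ y : ℝ, ∃ P : ℝ[X], P.natDegree ≤ k ∧ ∀ x, P.eval x = v (x, y) := by
    intro y
    refine ⟨∑ i : Fin (k+1), Polynomial.C (∑ j : Fin (k+1), c i j * y ^ (j:ℕ)) *
      Polynomial.X ^ (i:ℕ), ?_, ?_⟩
    · apply Polynomial.natDegree_sum_le_of_forall_le
      intro i _
      exact (Polynomial.natDegree_C_mul_X_pow_le _ _).trans i.is_le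
    · intro x
      rw [hc (x, y)]
      simp only [Polynomial.eval_finset_sum, Polynomial.eval_mul, Polynomial.eval_C,
        Polynomial.eval_pow, Polynomial.eval_X]
      refine Finset.sum_congr rfl fun i _ => ?_
      rw [Finset.sum_mul]
      exact Finset.sum_congr rfl fun j _ => by ring
  set D := ∫ x in a..(a+hx), ∫ y in b..(b+hy), (v (x, y))^2 with hD
  set E := ∫ y in b..(b+hy), ∫ x in a..(a+hx), (v (x, y))^2 with hE
  have hswap : D = E :=
    swap_int (fun p => (v p)^2) (hvc.pow 2) hax hby
  -- continuity of parametric integrals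
  have hFcont : Continuous (fun x => ∫ y in b..(b+hy), (v (x, y))^2) := by
    apply intervalIntegral.continuous_parametric_intervalIntegral_of_continuous'
      (f := fun x y => (v (x, y))^2)
    show Continuous fun p : ℝ × ℝ => (v (p.1, p.2))^2
    fun_prop
  have hGcont : Continuous (fun y => ∫ x in a..(a+hx), (v (x, y))^2) := by
    apply intervalIntegral.continuous_parametric_intervalIntegral_of_continuous'
      (f := fun y x => (v (x, y))^2)
    show Continuous fun p : ℝ × ℝ => (v (p.2, p.1))^2
    fun_prop
  -- edge bounds, x-parallel edges
  have hedge1 : ∀ y₀ : ℝ, (∀ x, (v (x, y₀))^2 ≤ C₀ / hy * ∫ y in b..(b+hy), (v (x, y))^2) →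
      (∫ x in a..(a+hx), (v (x, y₀))^2) ≤ C₀ / hy * D := by
    intro y₀ hpt
    have hmono : (∫ x in a..(a+hx), (v (x, y₀))^2) ≤
        ∫ x in a..(a+hx), C₀ / hy * ∫ y in b..(b+hy), (v (x, y))^2 := by
      apply intervalIntegral.integral_mono_on hax
      · exact Continuous.intervalIntegrable (by fun_prop) _ _
      · exact Continuous.intervalIntegrable (continuous_const.mul hFcont) _ _
      · exact fun x _ => hpt x
    rwa [intervalIntegral.integral_const_mul] at hmono
  have hedge2 : ∀ x₀ : ℝ, (∀ y, (v (x₀, y))^2 ≤ C₀ / hx * ∫ x in a..(a+hx), (v (x, y))^2) →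
      (∫ y in b..(b+hy), (v (x₀, y))^2) ≤ C₀ / hx * D := by
    intro x₀ hpt
    have hmono : (∫ y in b..(b+hy), (v (x₀, y))^2) ≤
        ∫ y in b..(b+hy), C₀ / hx * ∫ x in a..(a+hx), (v (x, y))^2 := by
      apply intervalIntegral.integral_mono_on hby
      · exact Continuous.intervalIntegrable (by fun_prop) _ _
      · exact Continuous.intervalIntegrable (continuous_const.mul hGcont) _ _
      · exact fun y _ => hpt y
    rw [intervalIntegral.integral_const_mul, ← hE, ← hswap] at hmono
    exact hmono
  refine ⟨?_, ?_, ?_, ?_⟩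
  · apply sqrt_step hC₀ hhy
    apply hedge1 b
    intro x
    obtain ⟨P, hPd, hPe⟩ := hPy x
    have := (H P hPd b hy hhy).1
    simpa only [hPe] using this
  · apply sqrt_step hC₀ hhy
    apply hedge1 (b + hy)
    intro x
    obtain ⟨P, hPd, hPe⟩ := hPy x
    have := (H P hPd b hy hhy).2
    simpa only [hPe] using this
  · apply sqrt_step hC₀ hhx
    apply hedge2 a
    intro y
    obtain ⟨P, hPd, hPe⟩ := hQx y
    have := (H P hPd a hx hhx).1
    simpa only [hPe] using this
  · apply sqrt_step hC₀ hhx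
    apply hedge2 (a + hx)
    intro y
    obtain ⟨P, hPd, hPe⟩ := hQx y
    have := (H P hPd a hx hhx).2
    simpa only [hPe] using this
end

section
/- Energy-identity for divergence-form convection on the whole domain with zero boundary trace data: if on each element T of a partition of Ω, (v₀, v_b) are given with v_b single-valued on interior edges and v_b = 0 on ∂Ω, then summing the weak-convection identity over elements gives Σ_T (∇_w^b v, v₀)_T = -(1/2) Σ_T (v₀, (∇·b) v₀)_T - (1/2) Σ_T ⟨(b·n)(v₀ - v_b), v₀ - v_b⟩_{∂T}, where all boundary terms involving v_b alone cancel across interior edges. -/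
/-!
On each rectangle the product rule gives `f ∇·(f b) = ½ ∇·(f² b) + ½ f (∇·b) f`, and the
divergence theorem turns `½ ∫ ∇·(f² b)` into the flux `½ ⟨(b·n) f, f⟩` through the boundary.
Polarization `2 q f = f² - (f - q)² + q²` on every edge then leaves, besides the claimed terms,
`½ ⟨(b·n) q, q⟩` with `q = v_b`. Summed over the partition these telescope: each interior edge is
shared by two rectangles with opposite normals, and `v_b = 0` on `∂Ω`.
-/
noncomputable def div2 (F : ℝ × ℝ → ℝ × ℝ) (z : ℝ × ℝ) : ℝ :=
  (fderiv ℝ F z (1, 0)).1 + (fderiv ℝ F z (0, 1)).2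

open intervalIntegral

theorem continuous_div2 {F : ℝ × ℝ → ℝ × ℝ} (hF : ContDiff ℝ 1 F) : Continuous (div2 F) := by
  have h : Continuous (fderiv ℝ F) := hF.continuous_fderiv one_ne_zero
  unfold div2
  fun_prop

theorem integral_integral_div2 {F : ℝ × ℝ → ℝ × ℝ} (hF : ContDiff ℝ 1 F) (a₁ b₁ a₂ b₂ : ℝ) :
    ∫ x in a₁..b₁, ∫ y in a₂..b₂, div2 F (x, y) =
      (∫ x in a₁..b₁, ((F (x, b₂)).2 - (F (x, a₂)).2))
        + ∫ y in a₂..b₂, ((F (b₁, y)).1 - (F (a₁, y)).1) := by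
  have hd : Differentiable ℝ F := hF.differentiable one_ne_zero
  have hc : Continuous F := hF.continuous
  have := MeasureTheory.integral2_divergence_prod_of_hasFDerivAt
    (fun z => (F z).1) (fun z => (F z).2)
    (fun z => (ContinuousLinearMap.fst ℝ ℝ ℝ).comp (fderiv ℝ F z))
    (fun z => (ContinuousLinearMap.snd ℝ ℝ ℝ).comp (fderiv ℝ F z)) a₁ a₂ b₁ b₂
    (by fun_prop) (by fun_prop)
    (fun z _ => (ContinuousLinearMap.fst ℝ ℝ ℝ).hasFDerivAt.comp z (hd z).hasFDerivAt)
    (fun z _ => (ContinuousLinearMap.snd ℝ ℝ ℝ).hasFDerivAt.comp z (hd z).hasFDerivAt)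
    ((continuous_div2 hF).continuousOn.integrableOn_compact (isCompact_uIcc.prod isCompact_uIcc))
  simp only [ContinuousLinearMap.comp_apply, ContinuousLinearMap.coe_fst',
    ContinuousLinearMap.coe_snd'] at this
  unfold div2
  rw [this, integral_sub, integral_sub]
  · ring
  all_goals apply Continuous.intervalIntegrable; fun_prop

theorem mul_div2_smul_self {b : ℝ × ℝ → ℝ × ℝ} {f : ℝ × ℝ → ℝ} {z : ℝ × ℝ}
    (hb : DifferentiableAt ℝ b z) (hf : DifferentiableAt ℝ f z) :
    f z * div2 (fun w => f w • b w) z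
      = (1/2) * div2 (fun w => (f w * f w) • b w) z + (1/2) * (f z * (div2 b z * f z)) := by
  unfold div2
  rw [fderiv_fun_smul hf hb, fderiv_fun_smul (hf.fun_mul hf) hb, fderiv_fun_mul hf hf]
  simp only [add_apply, smul_apply, ContinuousLinearMap.smulRight_apply, Prod.fst_add,
    Prod.snd_add, Prod.smul_fst, Prod.smul_snd, smul_eq_mul]
  ring

theorem integral_integral_add {g h : ℝ × ℝ → ℝ} (hg : Continuous g) (hh : Continuous h)
    (a₁ b₁ a₂ b₂ : ℝ) :
    ∫ x in a₁..b₁, ∫ y in a₂..b₂, (g (x, y) + h (x, y)) =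
      (∫ x in a₁..b₁, ∫ y in a₂..b₂, g (x, y)) + ∫ x in a₁..b₁, ∫ y in a₂..b₂, h (x, y) := by
  have hint : ∀ {k : ℝ × ℝ → ℝ}, Continuous k →
      IntervalIntegrable (fun x => ∫ y in a₂..b₂, k (x, y)) MeasureTheory.volume a₁ b₁ :=
    fun hk => (continuous_parametric_intervalIntegral_of_continuous' (by fun_prop) _ _
      ).intervalIntegrable _ _
  have hinner : ∀ x, ∫ y in a₂..b₂, (g (x, y) + h (x, y)) =
      (∫ y in a₂..b₂, g (x, y)) + ∫ y in a₂..b₂, h (x, y) := fun x =>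
    integral_add (Continuous.intervalIntegrable (by fun_prop) _ _)
      (Continuous.intervalIntegrable (by fun_prop) _ _)
  simp_rw [hinner]
  exact integral_add (hint hg) (hint hh)

theorem integral_integral_mul_div2_smul_self {b : ℝ × ℝ → ℝ × ℝ} {f : ℝ × ℝ → ℝ}
    (hb : ContDiff ℝ 1 b) (hf : ContDiff ℝ 1 f) (a₁ b₁ a₂ b₂ : ℝ) :
    ∫ x in a₁..b₁, ∫ y in a₂..b₂, f (x, y) * div2 (fun z => f z • b z) (x, y)
      = (1/2) * (∫ x in a₁..b₁, ∫ y in a₂..b₂, div2 (fun z => (f z * f z) • b z) (x, y))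
        + (1/2) * ∫ x in a₁..b₁, ∫ y in a₂..b₂, f (x, y) * (div2 b (x, y) * f (x, y)) := by
  have hf₂b : ContDiff ℝ 1 (fun z => (f z * f z) • b z) := (hf.mul hf).smul hb
  have hpt := fun z => mul_div2_smul_self (z := z) (hb.differentiable one_ne_zero z)
    (hf.differentiable one_ne_zero z)
  have hc₁ := continuous_div2 hf₂b
  have hc₂ := continuous_div2 hb
  have hfc := hf.continuous
  simp only [hpt]
  rw [integral_integral_add (g := fun z => 1/2 * div2 (fun z => (f z * f z) • b z) z)
    (h := fun z => 1/2 * (f z * (div2 b z * f z))) (by fun_prop) (by fun_prop)]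
  simp only [integral_const_mul]

theorem integral_polarize_sub {c d u v p q : ℝ → ℝ} (hc : Continuous c) (hd : Continuous d)
    (hu : Continuous u) (hv : Continuous v) (hp : Continuous p) (hq : Continuous q) (a b : ℝ) :
    (∫ x in a..b, (d x * q x * v x - c x * p x * u x))
      - (1/2) * (∫ x in a..b, (v x * v x * d x - u x * u x * c x))
    = -(1/2) * (∫ x in a..b, (d x * (v x - q x)^2 - c x * (u x - p x)^2))
      + (1/2) * ∫ x in a..b, (d x * q x ^ 2 - c x * p x ^ 2) := by
  simp only [← integral_const_mul]
  rw [← integral_sub, ← integral_add]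
  · exact integral_congr fun x _ => by ring
  all_goals apply Continuous.intervalIntegrable; fun_prop

theorem weak_convection_energy_rect {b : ℝ × ℝ → ℝ × ℝ} {f : ℝ × ℝ → ℝ} (hb : ContDiff ℝ 1 b)
    (hf : ContDiff ℝ 1 f) {p q r s : ℝ → ℝ} (hp : Continuous p) (hq : Continuous q)
    (hr : Continuous r) (hs : Continuous s) (a₁ b₁ a₂ b₂ : ℝ) :
    -(∫ x in a₁..b₁, ∫ y in a₂..b₂, f (x, y) * div2 (fun z => f z • b z) (x, y))
      + ((∫ x in a₁..b₁, ((b (x, b₂)).2 * q x * f (x, b₂) - (b (x, a₂)).2 * p x * f (x, a₂)))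
        + ∫ y in a₂..b₂, ((b (b₁, y)).1 * s y * f (b₁, y) - (b (a₁, y)).1 * r y * f (a₁, y)))
    = -(1/2) * (∫ x in a₁..b₁, ∫ y in a₂..b₂, f (x, y) * (div2 b (x, y) * f (x, y)))
      - (1/2) * ((∫ x in a₁..b₁, ((b (x, b₂)).2 * (f (x, b₂) - q x)^2
            - (b (x, a₂)).2 * (f (x, a₂) - p x)^2))
        + ∫ y in a₂..b₂, ((b (b₁, y)).1 * (f (b₁, y) - s y)^2
            - (b (a₁, y)).1 * (f (a₁, y) - r y)^2))
      + (1/2) * ((∫ x in a₁..b₁, ((b (x, b₂)).2 * q x ^ 2 - (b (x, a₂)).2 * p x ^ 2))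
        + ∫ y in a₂..b₂, ((b (b₁, y)).1 * s y ^ 2 - (b (a₁, y)).1 * r y ^ 2)) := by
  have hbc := hb.continuous
  have hfc := hf.continuous
  have hflux := integral_integral_div2 (F := fun z => (f z * f z) • b z) ((hf.mul hf).smul hb)
    a₁ b₁ a₂ b₂
  simp only [Prod.smul_snd, Prod.smul_fst, smul_eq_mul] at hflux
  have horiz := integral_polarize_sub (c := fun x => (b (x, a₂)).2) (d := fun x => (b (x, b₂)).2)
    (u := fun x => f (x, a₂)) (v := fun x => f (x, b₂)) (by fun_prop) (by fun_prop)
    (by fun_prop) (by fun_prop) hp hq a₁ b₁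
  have vert := integral_polarize_sub (c := fun y => (b (a₁, y)).1) (d := fun y => (b (b₁, y)).1)
    (u := fun y => f (a₁, y)) (v := fun y => f (b₁, y)) (by fun_prop) (by fun_prop)
    (by fun_prop) (by fun_prop) hr hs a₂ b₂
  rw [integral_integral_mul_div2_smul_self hb hf, hflux]
  linarith

theorem sum_range_integral_sub_eq_zero {φ : ℕ → ℝ → ℝ} (hφ : ∀ j, Continuous (φ j))
    (a b : ℝ) {M : ℕ} (h0 : φ 0 = 0) (hM : φ M = 0) :
    ∑ j ∈ Finset.range M, ∫ x in a..b, (φ (j + 1) x - φ j x) = 0 := by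
  rw [Finset.sum_congr rfl fun j _ =>
      integral_sub ((hφ (j + 1)).intervalIntegrable a b) ((hφ j).intervalIntegrable a b),
    Finset.sum_range_sub (fun j => ∫ x in a..b, φ j x), hM, h0]
  simp

theorem stmt13_general (M : ℕ) (xg yg : ℕ → ℝ)
    (bb : ℝ × ℝ → ℝ × ℝ) (hbb : ContDiff ℝ 1 bb)
    (v₀ : ℕ → ℕ → ℝ × ℝ → ℝ) (hv₀ : ∀ i j, ContDiff ℝ 1 (v₀ i j))
    (vbV vbH : ℕ → ℕ → ℝ → ℝ)
    (hvbVc : ∀ i j, Continuous (vbV i j)) (hvbHc : ∀ i j, Continuous (vbH i j))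
    (hL : ∀ j, vbV 0 j = fun _ => 0) (hR : ∀ j, vbV M j = fun _ => 0)
    (hB : ∀ i, vbH i 0 = fun _ => 0) (hT : ∀ i, vbH i M = fun _ => 0) :
    (∑ i ∈ Finset.range M, ∑ j ∈ Finset.range M,
      (-(∫ x in xg i..xg (i+1), ∫ y in yg j..yg (j+1),
            v₀ i j (x, y) * div2 (fun z => v₀ i j z • bb z) (x, y))
        + ((∫ x in xg i..xg (i+1),
              ((bb (x, yg (j+1))).2 * vbH i (j+1) x * v₀ i j (x, yg (j+1))
                - (bb (x, yg j)).2 * vbH i j x * v₀ i j (x, yg j)))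
          + (∫ y in yg j..yg (j+1),
              ((bb (xg (i+1), y)).1 * vbV (i+1) j y * v₀ i j (xg (i+1), y)
                - (bb (xg i, y)).1 * vbV i j y * v₀ i j (xg i, y)))))) =
    -(1/2) * (∑ i ∈ Finset.range M, ∑ j ∈ Finset.range M,
        ∫ x in xg i..xg (i+1), ∫ y in yg j..yg (j+1),
          v₀ i j (x, y) * (div2 bb (x, y) * v₀ i j (x, y)))
    - (1/2) * (∑ i ∈ Finset.range M, ∑ j ∈ Finset.range M,
        ((∫ x in xg i..xg (i+1),
            ((bb (x, yg (j+1))).2 * (v₀ i j (x, yg (j+1)) - vbH i (j+1) x)^2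
              - (bb (x, yg j)).2 * (v₀ i j (x, yg j) - vbH i j x)^2))
          + (∫ y in yg j..yg (j+1),
            ((bb (xg (i+1), y)).1 * (v₀ i j (xg (i+1), y) - vbV (i+1) j y)^2
              - (bb (xg i, y)).1 * (v₀ i j (xg i, y) - vbV i j y)^2)))) := by
  have hbc := hbb.continuous
  have hcancel : ∑ i ∈ Finset.range M, ∑ j ∈ Finset.range M,
      ((∫ x in xg i..xg (i+1),
          ((bb (x, yg (j+1))).2 * vbH i (j+1) x ^ 2 - (bb (x, yg j)).2 * vbH i j x ^ 2))
        + ∫ y in yg j..yg (j+1),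
          ((bb (xg (i+1), y)).1 * vbV (i+1) j y ^ 2 - (bb (xg i, y)).1 * vbV i j y ^ 2)) = 0 := by
    simp only [Finset.sum_add_distrib]
    rw [Finset.sum_comm (f := fun i j => ∫ y in yg j..yg (j+1), _)]
    refine (congrArg₂ (· + ·) (Finset.sum_eq_zero fun i _ => ?_)
      (Finset.sum_eq_zero fun j _ => ?_)).trans (add_zero 0)
    · refine sum_range_integral_sub_eq_zero (φ := fun j x => (bb (x, yg j)).2 * vbH i j x ^ 2)
        (fun j => ?_) _ _ (by funext; simp [hB]) (by funext; simp [hT])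
      have := hvbHc i j
      fun_prop
    · refine sum_range_integral_sub_eq_zero (φ := fun i y => (bb (xg i, y)).1 * vbV i j y ^ 2)
        (fun i => ?_) _ _ (by funext; simp [hL]) (by funext; simp [hR])
      have := hvbVc i j
      fun_prop
  rw [Finset.sum_congr rfl fun i _ => Finset.sum_congr rfl fun j _ =>
    weak_convection_energy_rect hbb (hv₀ i j) (hvbHc i j) (hvbHc i (j+1)) (hvbVc i j)
      (hvbVc (i+1) j) (xg i) (xg (i+1)) (yg j) (yg (j+1))]
  simp only [Finset.sum_add_distrib, Finset.sum_sub_distrib, ← Finset.mul_sum] at hcancel ⊢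
  rw [hcancel]
  ring

/-- Summed energy identity for the weak convection divergence on a tensor-product
rectangular partition of `Ω = (0,1)²`: with `v_b` single-valued on interior edges
(vertical edge functions `vbV i j` at `x = x_i`, horizontal `vbH i j` at `y = y_j`)
and vanishing on `∂Ω`,
`Σ_T (∇_w^b v, v₀)_T = -(1/2) Σ_T (v₀, (∇·b) v₀)_T
  - (1/2) Σ_T ⟨(b·n)(v₀-v_b), v₀-v_b⟩_{∂T}`,
where `(∇_w^b v, v₀)_T = -(v₀, ∇·(b v₀))_T + ⟨v_b, (b·n) v₀⟩_{∂T}`; the boundary terms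
involving `v_b` alone cancel across interior edges. -/
theorem stmt13 (M : ℕ) (hM : 1 ≤ M) (xg yg : ℕ → ℝ)
    (hx0 : xg 0 = 0) (hxM : xg M = 1) (hy0 : yg 0 = 0) (hyM : yg M = 1)
    (hxmono : ∀ i < M, xg i < xg (i+1)) (hymono : ∀ j < M, yg j < yg (j+1))
    (bb : ℝ × ℝ → ℝ × ℝ) (hbb : ContDiff ℝ 1 bb)
    (v₀ : ℕ → ℕ → ℝ × ℝ → ℝ) (hv₀ : ∀ i j, ContDiff ℝ 1 (v₀ i j))
    (vbV vbH : ℕ → ℕ → ℝ → ℝ)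
    (hvbVc : ∀ i j, Continuous (vbV i j)) (hvbHc : ∀ i j, Continuous (vbH i j))
    (hL : ∀ j, vbV 0 j = fun _ => 0) (hR : ∀ j, vbV M j = fun _ => 0)
    (hB : ∀ i, vbH i 0 = fun _ => 0) (hT : ∀ i, vbH i M = fun _ => 0) :
    (∑ i ∈ Finset.range M, ∑ j ∈ Finset.range M,
      (-(∫ x in xg i..xg (i+1), ∫ y in yg j..yg (j+1),
            v₀ i j (x, y) * div2 (fun z => v₀ i j z • bb z) (x, y))
        + ((∫ x in xg i..xg (i+1),
              ((bb (x, yg (j+1))).2 * vbH i (j+1) x * v₀ i j (x, yg (j+1))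
                - (bb (x, yg j)).2 * vbH i j x * v₀ i j (x, yg j)))
          + (∫ y in yg j..yg (j+1),
              ((bb (xg (i+1), y)).1 * vbV (i+1) j y * v₀ i j (xg (i+1), y)
                - (bb (xg i, y)).1 * vbV i j y * v₀ i j (xg i, y)))))) =
    -(1/2) * (∑ i ∈ Finset.range M, ∑ j ∈ Finset.range M,
        ∫ x in xg i..xg (i+1), ∫ y in yg j..yg (j+1),
          v₀ i j (x, y) * (div2 bb (x, y) * v₀ i j (x, y)))
    - (1/2) * (∑ i ∈ Finset.range M, ∑ j ∈ Finset.range M,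
        ((∫ x in xg i..xg (i+1),
            ((bb (x, yg (j+1))).2 * (v₀ i j (x, yg (j+1)) - vbH i (j+1) x)^2
              - (bb (x, yg j)).2 * (v₀ i j (x, yg j) - vbH i j x)^2))
          + (∫ y in yg j..yg (j+1),
            ((bb (xg (i+1), y)).1 * (v₀ i j (xg (i+1), y) - vbV (i+1) j y)^2
              - (bb (xg i, y)).1 * (v₀ i j (xg i, y) - vbV i j y)^2)))) :=
  stmt13_general M xg yg bb hbb v₀ hv₀ vbV vbH hvbVc hvbHc hL hR hB hT
end
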